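/- arXiv:1702.08426 — 5 statements merged into one kernel-verified Lean document; each statement's English description precedes it below -/
import Mathlib

section
/- Let (X, μ) be a symmetric space (a reflection space additionally satisfying (RS4): x·y = y implies x = y). Let S = { s_x | x ∈ X } be its set of point reflections inside the automorphism group, and let G be the subgroup generated by S. Then the map x ↦ s_x is an injective morphism of reflection spaces from (X, μ) to (S, ψ), where ψ(s, r) = s r s, and it is a bijection onto S. Moreover G has trivial center. -/
/-- Involution model of a symmetric space: the map `x ↦ s_x` into the permutation group
is an injective morphism of reflection spaces onto the set of point reflections
(where `ψ(s,r) = s r s`), and the group generated by the point reflections has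
trivial center. -/
theorem stmt_3 {X : Type*} (mul : X → X → X)
    (rs1 : ∀ x, mul x x = x)
    (rs2 : ∀ x y, mul x (mul x y) = y)
    (rs3 : ∀ x y z, mul x (mul y z) = mul (mul x y) (mul x z))
    (rs4 : ∀ x y, mul x y = y → x = y)
    (s : X → Equiv.Perm X) (hs : ∀ x y, s x y = mul x y) :
    Function.Injective s ∧
    (∀ x y : X, s (mul x y) = s x * s y * s x) ∧
    (∀ g ∈ Subgroup.closure (Set.range s),
      (∀ h ∈ Subgroup.closure (Set.range s), g * h = h * g) → g = 1) := by
  refine ⟨?_, ?_, ?_⟩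
  · intro x y hxy
    apply rs4
    have h := congrArg (fun f : Equiv.Perm X => f y) hxy
    simp only [hs] at h
    rw [h, rs1]
  · intro x y
    ext z
    simp only [Equiv.Perm.mul_apply, hs]
    rw [rs3, rs2]
  · intro g _ hcomm
    have key : ∀ x, g x = x := by
      intro x
      have hx : s x ∈ Subgroup.closure (Set.range s) :=
        Subgroup.subset_closure ⟨x, rfl⟩
      have h := congrArg (fun f : Equiv.Perm X => f x) (hcomm (s x) hx)
      simp only [Equiv.Perm.mul_apply, hs] at h
      rw [rs1] at h
      exact (rs4 x (g x) h.symm).symm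
    exact Equiv.ext key
end

section
/- Let X be a locally compact Hausdorff topological reflection space and let Y ⊆ X be midpoint convex (for all p, q ∈ Y there exists z ∈ Y with z·p = q). Then the closure of Y in X is also midpoint convex, provided the closure of Y is compact (or, more generally, provided each net of midpoints of points of Y admits a convergent subnet in the closure of Y). -/
open Topology Filter


/-- In a locally compact Hausdorff topological reflection space, the closure of a
midpoint convex subset is midpoint convex, provided this closure is compact. -/
theorem stmt_6 {X : Type*} [TopologicalSpace X] [T2Space X] [LocallyCompactSpace X]
    (mul : X → X → X)
    (hcont : Continuous fun p : X × X => mul p.1 p.2)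
    (rs1 : ∀ x, mul x x = x)
    (rs2 : ∀ x y, mul x (mul x y) = y)
    (rs3 : ∀ x y z, mul x (mul y z) = mul (mul x y) (mul x z))
    (Y : Set X) (hY : ∀ p ∈ Y, ∀ q ∈ Y, ∃ z ∈ Y, mul z p = q)
    (hc : IsCompact (closure Y)) :
    ∀ p ∈ closure Y, ∀ q ∈ closure Y, ∃ z ∈ closure Y, mul z p = q := by
  classical
  intro p hp q hq
  choose! m hmY hmul using hY
  have hpn : (𝓝[Y] p).NeBot := mem_closure_iff_nhdsWithin_neBot.mp hp
  have hqn : (𝓝[Y] q).NeBot := mem_closure_iff_nhdsWithin_neBot.mp hq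
  have hFne : ((𝓝[Y] p) ×ˢ (𝓝[Y] q)).NeBot := Filter.prod_neBot.mpr ⟨hpn, hqn⟩
  let U : Ultrafilter (X × X) := @Ultrafilter.of _ _ hFne
  have hUF : ↑U ≤ (𝓝[Y] p) ×ˢ (𝓝[Y] q) := Ultrafilter.of_le _
  -- the set Y ×ˢ Y is in U
  have hYY : (Y ×ˢ Y : Set (X × X)) ∈ U :=
    hUF (Filter.prod_mem_prod self_mem_nhdsWithin self_mem_nhdsWithin)
  -- map through midpoints
  have hmem : ↑(U.map fun ab : X × X => m ab.1 ab.2) ≤ Filter.principal (closure Y) := by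
    rw [Filter.le_principal_iff]
    refine Filter.mem_map.mpr (Filter.mem_of_superset hYY ?_)
    rintro ⟨a, b⟩ ⟨ha, hb⟩
    exact subset_closure (hmY a ha b hb)
  obtain ⟨z, hz, hVz⟩ := hc.ultrafilter_le_nhds _ hmem
  refine ⟨z, hz, ?_⟩
  have htm : Filter.Tendsto (fun ab : X × X => m ab.1 ab.2) U (𝓝 z) := hVz
  have htp : Filter.Tendsto (fun ab : X × X => ab.1) U (𝓝 p) :=
    (Filter.tendsto_fst.mono_left hUF).mono_right nhdsWithin_le_nhds
  have htq : Filter.Tendsto (fun ab : X × X => ab.2) U (𝓝 q) :=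
    (Filter.tendsto_snd.mono_left hUF).mono_right nhdsWithin_le_nhds
  have hpair : Filter.Tendsto (fun ab : X × X => (m ab.1 ab.2, ab.1)) U (𝓝 (z, p)) := by
    rw [nhds_prod_eq]; exact htm.prodMk htp
  have h1 : Filter.Tendsto (fun ab : X × X => mul (m ab.1 ab.2) ab.1) U (𝓝 (mul z p)) :=
    (hcont.tendsto (z, p)).comp hpair
  have h2 : Filter.Tendsto (fun ab : X × X => mul (m ab.1 ab.2) ab.1) U (𝓝 q) := by
    refine htq.congr' ?_
    filter_upwards [hYY] with ab hab
    exact (hmul ab.1 hab.1 ab.2 hab.2).symm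
  exact tendsto_nhds_unique h1 h2
end

section
/- The closed midpoint convex reflection subspaces of Euclidean space E^n = (ℝ^n, μ_E), μ_E(x,y) = 2x − y, are exactly the affine subspaces of ℝ^n (translates of linear subspaces). -/
/-! Let `Y` be closed, midpoint convex and closed under reflections, and let `x, y, z ∈ Y`.
The parameters `c` with `c • (x - y) + z ∈ Y` form a closed subset of `ℝ` with the same two
closure properties, containing `0` and `1` (since `x - y + z` is the reflection of `y` in the
midpoint of `x` and `z`). Such a set is an additive subgroup of `ℝ` containing every `2⁻ᵐ`,
hence dense, hence all of `ℝ`; so `Y` is an affine subspace. Conversely, affine subspaces of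
a finite-dimensional space are closed. -/

open Set

section ReflectionSubspace

variable {E : Type*} [AddCommGroup E] [Module ℝ E]

def IsReflectionSubspace (Y : Set E) : Prop :=
  ∀ x ∈ Y, ∀ y ∈ Y, (2 : ℝ) • x - y ∈ Y

def IsMidpointConvex (Y : Set E) : Prop :=
  ∀ p ∈ Y, ∀ q ∈ Y, ∃ z ∈ Y, (2 : ℝ) • z - p = q

theorem IsMidpointConvex.inv_two_smul_add_mem {Y : Set E} (hY : IsMidpointConvex Y)
    {p q : E} (hp : p ∈ Y) (hq : q ∈ Y) : (2 : ℝ)⁻¹ • (p + q) ∈ Y := by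
  obtain ⟨z, hz, rfl⟩ := hY p hp q hq
  convert hz using 1
  module

theorem IsReflectionSubspace.preimage_line {Y : Set E} (hY : IsReflectionSubspace Y) (v z : E) :
    IsReflectionSubspace {c : ℝ | c • v + z ∈ Y} := by
  intro a ha b hb
  rw [mem_ofPred_eq]
  convert hY _ ha _ hb using 1
  simp only [smul_eq_mul]
  module

theorem IsMidpointConvex.preimage_line {Y : Set E} (hY : IsMidpointConvex Y) (v z : E) :
    IsMidpointConvex {c : ℝ | c • v + z ∈ Y} := by
  intro a ha b hb
  refine ⟨(2 : ℝ)⁻¹ • (a + b), ?_, by simp only [smul_eq_mul]; ring⟩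
  rw [mem_ofPred_eq]
  convert hY.inv_two_smul_add_mem ha hb using 1
  simp only [smul_eq_mul]
  module

theorem AffineSubspace.isReflectionSubspace (S : AffineSubspace ℝ E) :
    IsReflectionSubspace (S : Set E) := by
  intro x hx y hy
  rw [SetLike.mem_coe]
  convert S.smul_vsub_vadd_mem 2 hx hy hy using 1
  simp only [vsub_eq_sub, vadd_eq_add]
  module

theorem AffineSubspace.isMidpointConvex (S : AffineSubspace ℝ E) :
    IsMidpointConvex (S : Set E) := by
  intro p hp q hq
  refine ⟨(2 : ℝ)⁻¹ • (q -ᵥ p) +ᵥ p, S.smul_vsub_vadd_mem _ hq hp hp, ?_⟩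
  simp only [vsub_eq_sub, vadd_eq_add]
  module

end ReflectionSubspace

theorem Real.eq_univ_of_isReflectionSubspace {T : Set ℝ} (hT : IsClosed T)
    (hrefl : IsReflectionSubspace T) (hmid : IsMidpointConvex T) (h0 : (0 : ℝ) ∈ T)
    (h1 : (1 : ℝ) ∈ T) : T = univ := by
  let S : AddSubgroup ℝ :=
    { carrier := T
      zero_mem' := h0
      add_mem' := fun {a b} ha hb => by
        convert hrefl _ (hmid.inv_two_smul_add_mem ha hb) _ h0 using 1
        simp only [smul_eq_mul]
        ring
      neg_mem' := fun {b} hb => by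
        convert hrefl _ h0 _ hb using 1
        simp only [smul_eq_mul]
        ring }
  have hpow : ∀ m : ℕ, (2⁻¹ : ℝ) ^ m ∈ T := by
    intro m
    induction m with
    | zero => simpa using h1
    | succ m ih =>
      convert hmid.inv_two_smul_add_mem ih h0 using 1
      simp only [smul_eq_mul, add_zero]
      ring
  have hdense : Dense (S : Set ℝ) := S.dense_of_not_isolated_zero fun ε hε => by
    obtain ⟨m, hm⟩ := exists_pow_lt_of_lt_one hε (by norm_num : (2⁻¹ : ℝ) < 1)
    exact ⟨_, hpow m, by positivity, hm⟩
  simpa [S, hT.closure_eq] using hdense.closure_eq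

theorem exists_affineSubspace_eq_of_isReflectionSubspace {E : Type*} [AddCommGroup E]
    [Module ℝ E] [TopologicalSpace E] [ContinuousAdd E] [ContinuousSMul ℝ E] {Y : Set E}
    (hY : IsClosed Y) (hrefl : IsReflectionSubspace Y) (hmid : IsMidpointConvex Y) :
    ∃ S : AffineSubspace ℝ E, Y = S := by
  refine ⟨⟨Y, fun c x y z hx hy hz => ?_⟩, rfl⟩
  have hline : {c : ℝ | c • (x - y) + z ∈ Y} = univ := by
    refine Real.eq_univ_of_isReflectionSubspace (hY.preimage (by fun_prop))
      (hrefl.preimage_line _ _) (hmid.preimage_line _ _) (by simpa using hz) ?_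
    rw [mem_ofPred_eq]
    convert hrefl _ (hmid.inv_two_smul_add_mem hx hz) _ hy using 1
    module
  exact (Set.eq_univ_iff_forall.mp hline) c

/-- The closed midpoint convex reflection subspaces of Euclidean space `E^n`
(with `μ_E(x,y) = 2x − y`) are exactly the affine subspaces of `ℝ^n`. -/
theorem stmt_8 (n : ℕ) (Y : Set (Fin n → ℝ)) :
    (IsClosed Y ∧
      (∀ x ∈ Y, ∀ y ∈ Y, (2 : ℝ) • x - y ∈ Y) ∧
      (∀ p ∈ Y, ∀ q ∈ Y, ∃ z ∈ Y, (2 : ℝ) • z - p = q)) ↔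
    ∃ S : AffineSubspace ℝ (Fin n → ℝ), Y = (S : Set (Fin n → ℝ)) := by
  constructor
  · rintro ⟨hY, hrefl, hmid⟩
    exact exists_affineSubspace_eq_of_isReflectionSubspace hY hrefl hmid
  · rintro ⟨S, rfl⟩
    exact ⟨S.closed_of_finiteDimensional, S.isReflectionSubspace, S.isMidpointConvex⟩
end

section
/- Let G be a group, θ an involutive automorphism of G with fixed subgroup K = G^θ and twist map τ(g) = g θ(g)⁻¹. Assume K ∩ τ(G) = {e}. Define μ on the coset space G/K by μ(gK, hK) = τ(g) θ(h) K. Then μ is well-defined and (G/K, μ) is a symmetric space: it satisfies (RS1) x·x = x, (RS2) x·(x·y) = y, (RS3) x·(y·z) = (x·y)·(x·z), and (RS4) x·y = y ⟹ x = y. Moreover the left-multiplication action of G on G/K is by automorphisms of (G/K, μ). -/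
/-- The subgroup of fixed points of a group endomorphism. -/
def fixedSubgroup {G : Type*} [Group G] (θ : G →* G) : Subgroup G where
  carrier := {g : G | θ g = g}
  one_mem' := by simp
  mul_mem' := by
    intro a b ha hb
    simp only [Set.mem_setOf_eq, map_mul] at *
    rw [ha, hb]
  inv_mem' := by
    intro a ha
    simp only [Set.mem_setOf_eq, map_inv] at *
    rw [ha]

lemma mem_fixedSubgroup {G : Type*} [Group G] (θ : G →* G) (g : G) :
    g ∈ fixedSubgroup θ ↔ θ g = g := Iff.rfl

/-- If `θ` is an involutive automorphism of `G` with fixed subgroup `K = G^θ` and twist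
map `τ(g) = g θ(g)⁻¹`, and `K ∩ τ(G) = {e}`, then `μ(gK, hK) = τ(g) θ(h) K` is a
well-defined multiplication making `G/K` a symmetric space (axioms (RS1)–(RS4)), and
`G` acts on `G/K` by automorphisms via left multiplication. -/
theorem stmt_14 {G : Type*} [Group G] (θ : G →* G) (hθ : ∀ g, θ (θ g) = g)
    (hK : ∀ g : G, θ (g * (θ g)⁻¹) = g * (θ g)⁻¹ → g * (θ g)⁻¹ = 1) :
    ∃ m : G ⧸ fixedSubgroup θ → G ⧸ fixedSubgroup θ → G ⧸ fixedSubgroup θ,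
      (∀ g h : G, m (g : G ⧸ fixedSubgroup θ) (h : G ⧸ fixedSubgroup θ) =
        ((g * (θ g)⁻¹ * θ h : G) : G ⧸ fixedSubgroup θ)) ∧
      (∀ x, m x x = x) ∧
      (∀ x y, m x (m x y) = y) ∧
      (∀ x y z, m x (m y z) = m (m x y) (m x z)) ∧
      (∀ x y, m x y = y → x = y) ∧
      (∀ (a : G) (x y : G ⧸ fixedSubgroup θ), m (a • x) (a • y) = a • m x y) := by
  classical
  refine ⟨fun x y => Quotient.liftOn₂' x y
      (fun g h => ((g * (θ g)⁻¹ * θ h : G) : G ⧸ fixedSubgroup θ)) ?_, ?_⟩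
  · intro g h g' h' hg hh
    rw [QuotientGroup.leftRel_apply] at hg hh
    rw [mem_fixedSubgroup] at hg hh
    refine (QuotientGroup.eq).2 ?_
    rw [mem_fixedSubgroup]
    have hg' : θ g' = θ g * (g⁻¹ * g') := by
      have e1 : θ (g⁻¹ * g') = g⁻¹ * g' := hg
      rw [map_mul, map_inv] at e1
      rw [← e1]; group
    have hh' : θ h' = θ h * (h⁻¹ * h') := by
      have e2 : θ (h⁻¹ * h') = h⁻¹ * h' := hh
      rw [map_mul, map_inv] at e2
      rw [← e2]; group
    have key : (g * (θ g)⁻¹ * θ h)⁻¹ * (g' * (θ g')⁻¹ * θ h') = h⁻¹ * h' := by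
      rw [hg', hh']; group
    rw [key]
    exact hh
  · refine ⟨fun g h => rfl, ?_, ?_, ?_, ?_, ?_⟩
    · intro x
      induction x using Quotient.inductionOn' with
      | h g =>
        show ((g * (θ g)⁻¹ * θ g : G) : G ⧸ fixedSubgroup θ) = _
        congr 1
        group
    · intro x y
      induction x using Quotient.inductionOn' with
      | h g =>
      induction y using Quotient.inductionOn' with
      | h h =>
        show ((_ : G) : G ⧸ fixedSubgroup θ) = ((h : G) : G ⧸ fixedSubgroup θ)
        congr 1
        simp only [map_mul, map_inv, hθ]
        group
    · intro x y z
      induction x using Quotient.inductionOn' with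
      | h g =>
      induction y using Quotient.inductionOn' with
      | h h =>
      induction z using Quotient.inductionOn' with
      | h k =>
        show ((_ : G) : G ⧸ fixedSubgroup θ) = ((_ : G) : G ⧸ fixedSubgroup θ)
        congr 1
        simp only [map_mul, map_inv, hθ]
        group
    · intro x y
      induction x using Quotient.inductionOn' with
      | h g =>
      induction y using Quotient.inductionOn' with
      | h h =>
        intro hxy
        have hw : θ ((g * (θ g)⁻¹ * θ h)⁻¹ * h) = (g * (θ g)⁻¹ * θ h)⁻¹ * h := by
          have := (QuotientGroup.eq).1
            (hxy : ((g * (θ g)⁻¹ * θ h : G) : G ⧸ fixedSubgroup θ) = (h : G ⧸ fixedSubgroup θ))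
          rwa [mem_fixedSubgroup] at this
        have hmem : (h⁻¹ * g) * (θ (h⁻¹ * g))⁻¹ = 1 := by
          apply hK
          have hrw : (h⁻¹ * g) * (θ (h⁻¹ * g))⁻¹ = ((g * (θ g)⁻¹ * θ h)⁻¹ * h)⁻¹ := by
            rw [map_mul, map_inv]; group
          rw [hrw, map_inv θ, hw]
        have h3 : h⁻¹ * g = θ (h⁻¹ * g) := mul_inv_eq_one.mp hmem
        refine (QuotientGroup.eq).2 ?_
        rw [mem_fixedSubgroup]
        rw [show (g⁻¹ * h : G) = (h⁻¹ * g)⁻¹ by group, map_inv, ← h3]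
    · intro a x y
      induction x using Quotient.inductionOn' with
      | h g =>
      induction y using Quotient.inductionOn' with
      | h h =>
        show Quotient.liftOn₂' (a • (g : G ⧸ fixedSubgroup θ)) _ _ _ = _
        have h1 : a • ((g : G ⧸ fixedSubgroup θ)) = ((a * g : G) : G ⧸ fixedSubgroup θ) := rfl
        have h2 : a • ((h : G ⧸ fixedSubgroup θ)) = ((a * h : G) : G ⧸ fixedSubgroup θ) := rfl
        rw [h1, h2]
        show ((_ : G) : G ⧸ fixedSubgroup θ) = a • ((_ : G) : G ⧸ fixedSubgroup θ)
        rw [show a • (((g * (θ g)⁻¹ * θ h : G)) : G ⧸ fixedSubgroup θ)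
            = ((a * (g * (θ g)⁻¹ * θ h) : G) : G ⧸ fixedSubgroup θ) from rfl]
        congr 1
        simp only [map_mul, map_inv, hθ]
        group
end

section
/- In the group SL₂(ℝ₁) with ℝ₁ = ℝ[t, t⁻¹] the Laurent polynomial ring, let θ(x) = ((x⁻¹)ᵀ)^σ where σ is the ring automorphism fixing ℝ and interchanging t and t⁻¹, and let u be the upper unitriangular matrix with off-diagonal entry 1 + t. Then v := τ(u) = u θ(u)⁻¹ has characteristic polynomial λ² − (t + 4 + t⁻¹)λ + 1, which does not split into linear factors over ℝ[t, t⁻¹]; hence v is not conjugate in SL₂(ℝ[t, t⁻¹]) to a diagonal matrix with entries in ℝ[t, t⁻¹]. -/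
open LaurentPolynomial Polynomial

/-! A matrix conjugate to a diagonal one has its diagonal entries as roots of its characteristic
polynomial `X² − (t + 4 + t⁻¹)X + 1`. Such a root cannot exist in `ℝ[t,t⁻¹]`: evaluating at
`t = -1/2` would give a real root of `X² − (3/2)X + 1`, whose discriminant is negative. -/

namespace Matrix

variable {n R : Type*} [Fintype n] [DecidableEq n] [CommRing R]

theorem charpoly_mul_mul_of_mul_eq_one {g h : Matrix n n R} (hgh : g * h = 1)
    (M : Matrix n n R) : (g * M * h).charpoly = M.charpoly := by
  rw [charpoly_mul_comm, ← mul_assoc, mul_eq_one_comm.mp hgh, one_mul]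

theorem IsDiag.isRoot_charpoly {D : Matrix n n R} (hD : D.IsDiag) (i : n) :
    D.charpoly.IsRoot (D i i) := by
  rw [IsRoot, ← hD.diagonal_diag, charpoly_diagonal, eval_prod]
  exact Finset.prod_eq_zero (Finset.mem_univ i) (by simp)

end Matrix

theorem not_exists_sq_sub_mul_add_one_eq_zero {R : Type*} [CommRing R] (φ : R →+* ℝ) {p : R}
    (hp : φ p ^ 2 < 4) : ¬ ∃ x : R, x ^ 2 - p * x + 1 = 0 := by
  rintro ⟨x, hx⟩
  have hφx : φ x ^ 2 - φ p * φ x + 1 = 0 := by simpa using congrArg φ hx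
  -- `4 (x² − p x + 1) = (2x − p)² + (4 − p²)`
  nlinarith [sq_nonneg (2 * φ x - φ p)]

/-- In `SL₂(ℝ[t,t⁻¹])`, the element `v = τ(u)` (with `u` upper unitriangular with entry
`1+t`) has characteristic polynomial `λ² − (t + 4 + t⁻¹)λ + 1`, which has no root in
`ℝ[t,t⁻¹]`; hence `v` is not conjugate within `SL₂(ℝ[t,t⁻¹])` to a diagonal matrix. -/
theorem stmt_16 :
    let t : LaurentPolynomial ℝ := T 1
    let tinv : LaurentPolynomial ℝ := T (-1)
    let v : Matrix (Fin 2) (Fin 2) (LaurentPolynomial ℝ) :=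
      !![1 + (1 + t) * (1 + tinv), 1 + t; 1 + tinv, 1]
    v.charpoly = X ^ 2 - Polynomial.C (t + 4 + tinv) * X + 1 ∧
    (¬ ∃ lam : LaurentPolynomial ℝ,
      lam ^ 2 - (t + 4 + tinv) * lam + 1 = 0) ∧
    (¬ ∃ g h : Matrix (Fin 2) (Fin 2) (LaurentPolynomial ℝ),
      g.det = 1 ∧ g * h = 1 ∧ (g * v * h).IsDiag) := by
  intro t tinv v
  have hcharpoly : v.charpoly = X ^ 2 - Polynomial.C (t + 4 + tinv) * X + 1 := by
    have htrace : v.trace = t + 4 + tinv := by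
      have htt : t * tinv = 1 := by rw [← T_add, add_neg_cancel, T_zero]
      rw [Matrix.trace_fin_two_of]
      linear_combination htt
    have hdet : v.det = 1 := by
      rw [Matrix.det_fin_two_of]
      ring
    rw [Matrix.charpoly_fin_two, htrace, hdet, map_one]
  have hroot : ¬ ∃ lam : LaurentPolynomial ℝ, lam ^ 2 - (t + 4 + tinv) * lam + 1 = 0 := by
    apply not_exists_sq_sub_mul_add_one_eq_zero
      (LaurentPolynomial.eval₂ (RingHom.id ℝ) (Units.mk0 (-1 / 2) (by norm_num)))
    rw [map_add, map_add, map_ofNat, eval₂_T, eval₂_T]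
    norm_num
  refine ⟨hcharpoly, hroot, ?_⟩
  rintro ⟨g, h, -, hgh, hdiag⟩
  refine hroot ⟨(g * v * h) 0 0, ?_⟩
  simpa [Matrix.charpoly_mul_mul_of_mul_eq_one hgh, hcharpoly] using hdiag.isRoot_charpoly 0
end
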